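/- For the simple symmetric random walk on ℤ started at 0, if T is the first hitting time of 2, then for every n ∈ ℕ one has P(T > 2n) = 4^{−n} · C(2n+1, n), where C(2n+1,n) is the binomial coefficient. (Theorem 5.2, identity (5.2)–(5.3).) -/

import Mathlib

/-!
A walk with steps `±1` cannot jump over `2`, so `T > 2n` exactly when `S_k ≤ 1` for all
`k ≤ 2n`. Independence makes the first `2n` steps uniform on `{±1}^{2n}`, so this probability
is `4^{-n}` times the number of such paths. Conditioning on the first step, the number `N(m, b)`
of paths of length `m` staying `≤ b` satisfies `N(m+1, b) = N(m, b-1) + N(m, b+1)` for `b ≥ 0`,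
which by Pascal's rule is also satisfied by the number of paths ending in `[-b-1, b]`
(the reflection principle). For `m = 2n`, `b = 1` these endpoints are `0` and `-2`, giving
`C(2n, n) + C(2n, n+1) = C(2n+1, n)`.
-/

open Finset MeasureTheory ProbabilityTheory

lemma Fin.partialSum_eq_sum_range {M : Type*} [AddCommMonoid M] {m : ℕ} (g : ℕ → M)
    (k : Fin (m + 1)) : Fin.partialSum (fun i : Fin m => g i) k = ∑ i ∈ range k, g i := by
  induction k using Fin.induction with
  | zero => simp
  | succ j ih => rw [Fin.partialSum_succ, ih, Fin.val_succ, sum_range_succ, Fin.val_castSucc]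

namespace SimpleRandomWalk

lemma natCast_lt_iInf_iff (p : ℕ → Prop) (m : ℕ) :
    (m : ℕ∞) < ⨅ (k : ℕ) (_ : p k), (k : ℕ∞) ↔ ∀ k ≤ m, ¬p k := by
  rw [← ENat.add_one_le_iff (ENat.natCast_ne_top m)]
  simp only [le_iInf_iff]
  refine forall_congr' fun k => ?_
  norm_cast
  exact ⟨fun h hk hp => absurd (h hp) (by omega), fun h hp => not_le.mp fun hk => h hk hp⟩

lemma forall_le_iff_forall_ne_add_one {s : ℕ → ℤ} {b : ℤ} {m : ℕ} (h0 : s 0 ≤ b)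
    (hstep : ∀ k < m, s (k + 1) ≤ s k + 1) : (∀ k ≤ m, s k ≤ b) ↔ ∀ k ≤ m, s k ≠ b + 1 := by
  refine ⟨fun h k hk => by have := h k hk; omega, fun h k => ?_⟩
  induction k with
  | zero => exact fun _ => h0
  | succ k ih =>
    intro hk
    have := ih (by omega)
    have := hstep k (by omega)
    have := h (k + 1) hk
    omega

def pathsBelow (m : ℕ) (b : ℤ) : Finset (Fin m → ℤ) :=
  {x ∈ Fintype.piFinset fun _ => {1, -1} | ∀ k, Fin.partialSum x k ≤ b}

lemma forall_partialSum_cons_le_iff {m : ℕ} {b : ℤ} (hb : 0 ≤ b) (a : ℤ) (y : Fin m → ℤ) :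
    (∀ k, Fin.partialSum (Fin.cons a y : Fin (m + 1) → ℤ) k ≤ b) ↔
      ∀ k, Fin.partialSum y k ≤ b - a := by
  simp only [Fin.forall_fin_succ (n := m + 1), Fin.partialSum_zero, Fin.partialSum_succ',
    Fin.cons_zero, Fin.tail_cons, hb, true_and, le_sub_iff_add_le']

lemma card_pathsBelow_succ (m : ℕ) {b : ℤ} (hb : 0 ≤ b) :
    #(pathsBelow (m + 1) b) = #(pathsBelow m (b - 1)) + #(pathsBelow m (b + 1)) := by
  have hcons := filter_piFinset_eq_map_consEquiv (fun _ : Fin (m + 1) => ({1, -1} : Finset ℤ))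
    (fun _ => True)
  simp only [filter_true] at hcons
  rw [pathsBelow, hcons, filter_map, card_map, card_filter, sum_product, sum_pair (by norm_num)]
  simp only [Function.comp_apply, Equiv.coe_toEmbedding, Fin.consEquiv, Equiv.coe_fn_mk,
    forall_partialSum_cons_le_iff hb, sub_neg_eq_add, ← card_filter]
  rfl

lemma pathsBelow_of_neg {m : ℕ} {b : ℤ} (hb : b < 0) : pathsBelow m b = ∅ :=
  filter_false_of_mem fun x _ h => (h 0).not_gt (by simpa using hb)

lemma card_pathsBelow_zero (b : ℤ) : #(pathsBelow 0 b) = if 0 ≤ b then 1 else 0 := by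
  split_ifs with hb
  · rw [pathsBelow, filter_true_of_mem (by simp [Fin.forall_fin_one, hb]), Fintype.card_piFinset]
    simp
  · rw [pathsBelow_of_neg (not_le.mp hb), card_empty]

lemma sum_filter_range_choose_succ (m : ℕ) (p : ℕ → Prop) [DecidablePred p] :
    ∑ k ∈ range (m + 2) with p k, (m + 1).choose k =
      ∑ k ∈ range (m + 1) with p k, m.choose k +
        ∑ k ∈ range (m + 1) with p (k + 1), m.choose k := by
  simp only [sum_filter]
  rw [sum_range_succ', sum_range_succ' (fun k => if p k then m.choose k else 0)]
  simp only [Nat.choose_succ_succ', ite_add_zero, sum_add_distrib, Nat.choose_zero_right]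
  rw [sum_range_succ (fun k => if p (k + 1) then m.choose (k + 1) else 0), Nat.choose_succ_self]
  simp only [ite_self, add_zero]
  ring

/-- The number of `±1`-paths of length `m` ending in `[-(b+1), b]` (`k` counts the down-steps);
by the reflection principle it is also the number of those staying `≤ b`. -/
def reflectionCount (m : ℕ) (b : ℤ) : ℕ :=
  ∑ k ∈ range (m + 1) with
    -(b + 1) ≤ (m : ℤ) - 2 * ((k : ℕ) : ℤ) ∧ (m : ℤ) - 2 * ((k : ℕ) : ℤ) ≤ b, m.choose k

lemma reflectionCount_zero (b : ℤ) : reflectionCount 0 b = if 0 ≤ b then 1 else 0 := by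
  simp only [reflectionCount, zero_add, range_one, sum_filter, sum_singleton]
  exact if_congr (by omega) rfl rfl

lemma reflectionCount_of_neg (m : ℕ) {b : ℤ} (hb : b < 0) : reflectionCount m b = 0 :=
  sum_eq_zero fun k hk => by simp only [mem_filter] at hk; omega

lemma reflectionCount_succ (m : ℕ) {b : ℤ} (hb : 0 ≤ b) :
    reflectionCount (m + 1) b = reflectionCount m (b - 1) + reflectionCount m (b + 1) := by
  rw [reflectionCount, sum_filter_range_choose_succ]
  simp only [reflectionCount, sum_filter, ← sum_add_distrib]
  refine sum_congr rfl fun k _ => ?_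
  push_cast
  split_ifs <;> omega

theorem card_pathsBelow (m : ℕ) (b : ℤ) : #(pathsBelow m b) = reflectionCount m b := by
  induction m generalizing b with
  | zero => rw [card_pathsBelow_zero, reflectionCount_zero]
  | succ m ih =>
    rcases lt_or_ge b 0 with hb | hb
    · rw [pathsBelow_of_neg hb, reflectionCount_of_neg _ hb, card_empty]
    · rw [card_pathsBelow_succ m hb, reflectionCount_succ m hb, ih, ih]

lemma reflectionCount_two_mul_one (n : ℕ) : reflectionCount (2 * n) 1 = (2 * n + 1).choose n := by
  rw [reflectionCount, sum_subset (s₂ := {n, n + 1}) (fun k hk => ?window) fun k hk hk' => ?zero,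
    sum_pair (by omega), ← Nat.choose_succ_succ', Nat.choose_symm_half]
  case window =>
    simp only [mem_filter, mem_insert, mem_singleton] at hk ⊢
    omega
  case zero =>
    simp only [mem_filter, mem_range, mem_insert, mem_singleton] at hk hk'
    exact Nat.choose_eq_zero_of_lt (by omega)

lemma mem_pathsBelow_iff_forall_ne {m : ℕ} {b : ℤ} (hb : 0 ≤ b) {x : ℕ → ℤ}
    (hx : ∀ i < m, x i ∈ ({1, -1} : Finset ℤ)) :
    (fun i : Fin m => x i) ∈ pathsBelow m b ↔ ∀ k ≤ m, ∑ i ∈ range k, x i ≠ b + 1 := by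
  have hsteps : (fun i : Fin m => x i) ∈ Fintype.piFinset fun _ => {1, -1} :=
    Fintype.mem_piFinset.mpr fun i => hx i i.isLt
  have hup : ∀ k < m, ∑ i ∈ range (k + 1), x i ≤ ∑ i ∈ range k, x i + 1 := by
    intro k hk
    have := hx k hk
    simp only [mem_insert, mem_singleton] at this
    rw [sum_range_succ]
    omega
  rw [pathsBelow, mem_filter, ← forall_le_iff_forall_ne_add_one (by simpa using hb) hup]
  simp only [hsteps, true_and, Fin.partialSum_eq_sum_range, Fin.forall_iff, Nat.lt_succ_iff]

variable {Ω β : Type*} [MeasurableSpace Ω] {P : Measure Ω}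

lemma ae_mem_of_sum_measure_eq_one [IsProbabilityMeasure P] [MeasurableSpace β]
    [MeasurableSingletonClass β] {X : Ω → β} (hX : Measurable X) (s : Finset β)
    (hs : ∑ z ∈ s, P {ω | X ω = z} = 1) : ∀ᵐ ω ∂P, X ω ∈ s := by
  have hpre := sum_measure_preimage_singleton (μ := P) s fun z _ => hX (measurableSet_singleton z)
  exact (prob_compl_eq_zero_iff (hX s.measurableSet)).mpr (hpre.symm.trans hs)

lemma measure_path_mem [MeasurableSpace β] [MeasurableSingletonClass β] {ξ : ℕ → Ω → β}
    (hmeas : ∀ k, Measurable (ξ k)) (hindep : iIndepFun ξ P) {s : Finset β} {q : ENNReal}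
    (hq : ∀ k, ∀ z ∈ s, P {ω | ξ k ω = z} = q) {m : ℕ} {A : Finset (Fin m → β)}
    (hA : A ⊆ Fintype.piFinset fun _ => s) :
    P {ω | (fun i : Fin m => ξ i ω) ∈ A} = #A * q ^ m := by
  have hpath : Measurable fun ω (i : Fin m) => ξ i ω := measurable_pi_lambda _ fun i => hmeas i
  have hcyl : ∀ x ∈ A, P ((fun ω (i : Fin m) => ξ i ω) ⁻¹' {x}) = q ^ m := by
    intro x hx
    have hcyl_eq : (fun ω (i : Fin m) => ξ i ω) ⁻¹' {x} = ⋂ i : Fin m, ξ i ⁻¹' {x i} := by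
      ext ω
      simp [funext_iff]
    rw [hcyl_eq, (hindep.precomp Fin.val_injective).meas_iInter
      fun i => ⟨{x i}, measurableSet_singleton _, rfl⟩]
    simp only [Set.preimage, Set.mem_singleton_iff]
    rw [Finset.prod_congr rfl fun (i : Fin m) _ => hq i (x i) (Fintype.mem_piFinset.mp (hA hx) i),
      prod_const, card_univ, Fintype.card_fin]
  change P ((fun ω (i : Fin m) => ξ i ω) ⁻¹' A) = _
  rw [← sum_measure_preimage_singleton A fun x _ => hpath (measurableSet_singleton x),
    sum_congr rfl hcyl, sum_const, nsmul_eq_mul]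

end SimpleRandomWalk

open SimpleRandomWalk

theorem hitting_time_two_tail {Ω : Type*} [MeasurableSpace Ω] (P : Measure Ω)
    [IsProbabilityMeasure P]
    (ξ : ℕ → Ω → ℤ) (hmeas : ∀ k, Measurable (ξ k))
    (hindep : iIndepFun ξ P)
    (hone : ∀ k, P {ω | ξ k ω = 1} = 1 / 2)
    (hmone : ∀ k, P {ω | ξ k ω = -1} = 1 / 2)
    (S : ℕ → Ω → ℤ) (hS : ∀ k ω, S k ω = ∑ i ∈ Finset.range k, ξ i ω)
    (T : Ω → ℕ∞) (hT : ∀ ω, T ω = ⨅ (k : ℕ) (_ : S k ω = 2), (k : ℕ∞))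
    (n : ℕ) :
    P {ω | ((2 * n : ℕ) : ℕ∞) < T ω} = (Nat.choose (2 * n + 1) n : ENNReal) / 4 ^ n := by
  have hhalf : ∀ k, ∀ z ∈ ({1, -1} : Finset ℤ), P {ω | ξ k ω = z} = 1 / 2 := by
    simp only [mem_insert, mem_singleton]
    rintro k z (rfl | rfl)
    exacts [hone k, hmone k]
  have hsteps : ∀ᵐ ω ∂P, ∀ k, ξ k ω ∈ ({1, -1} : Finset ℤ) :=
    ae_all_iff.mpr fun k => ae_mem_of_sum_measure_eq_one (hmeas k) _ <| by
      rw [sum_pair (by norm_num), hone k, hmone k, ENNReal.add_halves]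
  have hevent : {ω | ((2 * n : ℕ) : ℕ∞) < T ω}
      =ᵐ[P] {ω | (fun i : Fin (2 * n) => ξ i ω) ∈ pathsBelow (2 * n) 1} := by
    refine Filter.eventuallyEq_set.mpr ?_
    filter_upwards [hsteps] with ω hω
    rw [hT, natCast_lt_iInf_iff, mem_pathsBelow_iff_forall_ne zero_le_one fun i _ => hω i]
    simp only [hS]
    norm_num
  rw [measure_congr hevent,
    measure_path_mem hmeas hindep hhalf (A := pathsBelow (2 * n) 1) (filter_subset _ _),
    card_pathsBelow, reflectionCount_two_mul_one, pow_mul, one_div, ← ENNReal.inv_pow,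
    ← ENNReal.inv_pow, ← div_eq_mul_inv]
  norm_num
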